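/- arXiv:1807.07361 — 2 statements merged into one kernel-verified Lean document; each statement's English description precedes it below -/
import Mathlib

section
/- Let σ : ℝ → ℝ be nondecreasing with σ(0)=0 satisfying k₁|u−v| ≤ |σ(u)−σ(v)| ≤ k₂|u−v| for all u,v with 0 < k₁ ≤ k₂, and let H : ℝ → ℝ satisfy π·H(u) = 2 l₀ α² C₀ σ(u − H(u)) for all u. Then H is Lipschitz continuous, monotone in the sense that (H(u)−H(v))(u−v) ≥ k̃₁ |u−v|² for some constant k̃₁ > 0, and |H(u)| ≤ |u| for all u. -/
/-- the solution `H` of the functional equation is Lipschitz,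
strongly monotone, and satisfies `|H u| ≤ |u|`. -/
theorem stmt1 (σ H : ℝ → ℝ) (k₁ k₂ C₀ l₀ α : ℝ)
    (hσ_mono : Monotone σ) (hσ0 : σ 0 = 0)
    (hk₁ : 0 < k₁) (hk₁₂ : k₁ ≤ k₂)
    (hbilip : ∀ u v : ℝ, k₁ * |u - v| ≤ |σ u - σ v| ∧ |σ u - σ v| ≤ k₂ * |u - v|)
    (hC₀ : 0 < C₀) (hl₀ : 0 < l₀) (hα : α ≠ 0)
    (hH : ∀ u : ℝ, Real.pi * H u = 2 * l₀ * α ^ 2 * C₀ * σ (u - H u)) :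
    (∃ L > 0, ∀ u v : ℝ, |H u - H v| ≤ L * |u - v|) ∧
    (∃ ktilde > 0, ∀ u v : ℝ, (H u - H v) * (u - v) ≥ ktilde * |u - v| ^ 2) ∧
    (∀ u : ℝ, |H u| ≤ |u|) := by
  have hπ := Real.pi_pos
  set c : ℝ := 2 * l₀ * α ^ 2 * C₀ with hc_def
  have hc : 0 < c := by positivity
  -- key pointwise facts
  have key : ∀ u v : ℝ, |H u - H v| ≤ |u - v| ∧
      (Real.pi + c * k₁) * ((H u - H v) * (u - v)) ≥ c * k₁ * (u - v) ^ 2 := by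
    intro u v
    set t : ℝ := H u - H v with ht
    set s : ℝ := u - v with hs
    have hEq : Real.pi * t = c * (σ (u - H u) - σ (v - H v)) := by
      have h1 := hH u; have h2 := hH v
      rw [ht]; ring_nf; ring_nf at h1 h2; linarith
    set S : ℝ := σ (u - H u) - σ (v - H v) with hS
    have hAB : (u - H u) - (v - H v) = s - t := by rw [ht, hs]; ring
    have hsign : S * (s - t) ≥ 0 := by
      rcases le_total (u - H u) (v - H v) with h | h
      · have h1 : S ≤ 0 := by have := hσ_mono h; simp [hS]; linarith
        have h2 : s - t ≤ 0 := by rw [← hAB]; linarith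
        nlinarith
      · have h1 : S ≥ 0 := by have := hσ_mono h; simp [hS]; linarith
        have h2 : s - t ≥ 0 := by rw [← hAB]; linarith
        nlinarith
    have hπt : Real.pi * (t * (s - t)) = c * (S * (s - t)) := by
      linear_combination (s - t) * hEq
    have h1 : t * (s - t) ≥ 0 := by
      nlinarith [mul_nonneg hc.le hsign, hπt, hπ]
    have hts : 0 ≤ t * s := by nlinarith [sq_nonneg t, h1]
    have habs : |t| ≤ |s| := by
      nlinarith [le_abs_self (t * s), abs_mul t s, sq_abs t, sq_abs s,
        abs_nonneg t, abs_nonneg s]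
    have hk : k₁ * |s - t| ≤ |S| := by
      have := (hbilip (u - H u) (v - H v)).1
      rwa [hAB] at this
    have h2 : Real.pi * |t| ≥ c * (k₁ * |s - t|) := by
      have e : Real.pi * |t| = c * |S| := by
        rw [← abs_of_pos hπ, ← abs_mul, hEq, abs_mul, abs_of_pos hc]
      rw [e]
      exact mul_le_mul_of_nonneg_left hk hc.le
    have h3 : |s| - |t| ≤ |s - t| := abs_sub_abs_le_abs_sub s t
    have h4 : (Real.pi + c * k₁) * |t| ≥ c * k₁ * |s| := by
      have hmul := mul_le_mul_of_nonneg_left h3 (by positivity : (0:ℝ) ≤ c * k₁)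
      linarith
    constructor
    · exact habs
    · have hts' : t * s = |t| * |s| := by
        rw [← abs_mul]; exact (abs_of_nonneg hts).symm
      have hmul := mul_le_mul_of_nonneg_right h4 (abs_nonneg s)
      have : (Real.pi + c * k₁) * (t * s) ≥ c * k₁ * |s| ^ 2 := by
        rw [hts']; nlinarith [hmul]
      rw [sq_abs] at this
      exact this
  refine ⟨⟨1, one_pos, fun u v => by simpa using (key u v).1⟩, ?_, ?_⟩
  · refine ⟨c * k₁ / (Real.pi + c * k₁), by positivity, fun u v => ?_⟩
    have h := (key u v).2
    rw [sq_abs, ge_iff_le, div_mul_eq_mul_div, div_le_iff₀ (by positivity)]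
    linarith [h]
  · intro u
    have hH0 : H 0 = 0 := by
      have h := hH 0
      have hle : H 0 ≤ 0 ∧ 0 ≤ H 0 := by
        constructor
        · by_contra hpos
          push_neg at hpos
          have : σ (0 - H 0) ≤ σ 0 := hσ_mono (by linarith)
          rw [hσ0] at this
          nlinarith
        · by_contra hneg
          push_neg at hneg
          have : σ 0 ≤ σ (0 - H 0) := hσ_mono (by linarith)
          rw [hσ0] at this
          nlinarith
      linarith [hle.1, hle.2]
    have := (key u 0).1
    simpa [hH0] using this
end

section
/- Let C > 0 and let σ : ℝ → ℝ be continuous, strictly increasing, surjective, with σ(0)=0, and assume H(u) = C σ(u − H(u)) for all u. Then 0 ≤ H(u) − H(v) ≤ u − v whenever v ≤ u, H(0) = 0, H(u) > 0 for u > 0, and H(u) < 0 for u < 0. -/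
/-- monotonicity and sign properties of the solution `H` of
`H(u) = C σ(u − H(u))`. -/
theorem stmt3 (σ H : ℝ → ℝ) (C : ℝ) (hC : 0 < C)
    (hσ_cont : Continuous σ) (hσ_mono : StrictMono σ)
    (hσ_surj : Function.Surjective σ) (hσ0 : σ 0 = 0)
    (hH : ∀ u : ℝ, H u = C * σ (u - H u)) :
    (∀ u v : ℝ, v ≤ u → 0 ≤ H u - H v ∧ H u - H v ≤ u - v) ∧
    H 0 = 0 ∧ (∀ u : ℝ, 0 < u → 0 < H u) ∧ (∀ u : ℝ, u < 0 → H u < 0) := by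
  have key : ∀ u v : ℝ, v ≤ u → 0 ≤ H u - H v ∧ H u - H v ≤ u - v := by
    intro u v hvu
    constructor
    · by_contra h
      push_neg at h
      have h1 : H u - H v = C * (σ (u - H u) - σ (v - H v)) := by
        rw [mul_sub, ← hH u, ← hH v]
      have h2 : σ (u - H u) - σ (v - H v) < 0 := by
        nlinarith
      have h3 : u - H u < v - H v := by
        by_contra h3
        push_neg at h3
        have := hσ_mono.monotone h3
        linarith
      linarith
    · by_contra h
      push_neg at h
      have h1 : H u - H v = C * (σ (u - H u) - σ (v - H v)) := by
        rw [mul_sub, ← hH u, ← hH v]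
      have h3 : u - H u < v - H v := by linarith
      have := hσ_mono h3
      nlinarith
  refine ⟨key, ?_, ?_, ?_⟩
  · rcases lt_trichotomy (H 0) 0 with h | h | h
    · have : σ (0 - H 0) > σ 0 := hσ_mono (by linarith)
      rw [hσ0] at this
      have := hH 0
      nlinarith
    · exact h
    · have : σ (0 - H 0) < σ 0 := hσ_mono (by linarith)
      rw [hσ0] at this
      have := hH 0
      nlinarith
  all_goals {
    intro u hu
    by_contra h
    push_neg at h
    first
    | (have h3 : 0 < u - H u := by linarith
       have := hσ_mono (show (0:ℝ) < u - H u from h3)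
       rw [hσ0] at this
       have := hH u
       nlinarith)
    | (have h3 : u - H u < 0 := by linarith
       have := hσ_mono (show u - H u < (0:ℝ) from h3)
       rw [hσ0] at this
       have := hH u
       nlinarith)
  }
end
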